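/- Define σ : ℂ × ℂ⁵ → ℂ⁵ by σ_t(x₁,x₂,x₃,x₄,x₅) := (x₁, x₂, x₃ + t(x₁ − x₂x₅) − t² x₂(x₁+1)/2, x₄ + t x₂, x₅ + t(x₁+1)). Then σ is an action of the additive group (ℂ,+) on ℂ⁵ (σ_0 = id and σ_s ∘ σ_t = σ_{s+t}), the action is free (σ_t(x) = x implies t = 0 for every x ∈ ℂ⁵), and the action is proper: the map ℂ × ℂ⁵ → ℂ⁵ × ℂ⁵, (t, x) ↦ (x, σ_t(x)), is a proper map, i.e., the preimage of every compact set is compact. -/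
import Mathlib


/-- The action of `(ℂ,+)` on `ℂ⁵` induced by the locally nilpotent derivation
`δ = (x₁ − x₂x₅) ∂/∂x₃ + x₂ ∂/∂x₄ + (x₁+1) ∂/∂x₅`. -/
noncomputable def sigma5 (t : ℂ) (x : Fin 5 → ℂ) : Fin 5 → ℂ :=
  ![x 0, x 1,
    x 2 + t * (x 0 - x 1 * x 4) - t ^ 2 * x 1 * (x 0 + 1) / 2,
    x 3 + t * x 1,
    x 4 + t * (x 0 + 1)]

lemma sigma5_0 (t : ℂ) (x : Fin 5 → ℂ) : sigma5 t x 0 = x 0 := rfl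
lemma sigma5_1 (t : ℂ) (x : Fin 5 → ℂ) : sigma5 t x 1 = x 1 := rfl
lemma sigma5_2 (t : ℂ) (x : Fin 5 → ℂ) :
    sigma5 t x 2 = x 2 + t * (x 0 - x 1 * x 4) - t ^ 2 * x 1 * (x 0 + 1) / 2 := rfl
lemma sigma5_3 (t : ℂ) (x : Fin 5 → ℂ) : sigma5 t x 3 = x 3 + t * x 1 := rfl
lemma sigma5_4 (t : ℂ) (x : Fin 5 → ℂ) : sigma5 t x 4 = x 4 + t * (x 0 + 1) := rfl

/-- Continuous left inverse of `(t,x) ↦ (x, σ_t x)`. -/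
noncomputable def rho5 (p : (Fin 5 → ℂ) × (Fin 5 → ℂ)) : ℂ × (Fin 5 → ℂ) :=
  ⟨(p.2 4 - p.1 4) - (p.2 2 - p.1 2) - (p.2 3 - p.1 3) * p.1 4
      - (p.2 3 - p.1 3) * (p.2 4 - p.1 4) / 2, p.1⟩

lemma rho5_cont : Continuous rho5 := by
  unfold rho5; fun_prop

lemma sigma5_cont :
    Continuous (fun tx : ℂ × (Fin 5 → ℂ) => (tx.2, sigma5 tx.1 tx.2)) := by
  refine Continuous.prodMk continuous_snd ?_
  refine continuous_pi fun i => ?_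
  fin_cases i
  · show Continuous fun a : ℂ × (Fin 5 → ℂ) => a.2 0
    fun_prop
  · show Continuous fun a : ℂ × (Fin 5 → ℂ) => a.2 1
    fun_prop
  · show Continuous fun a : ℂ × (Fin 5 → ℂ) =>
      a.2 2 + a.1 * (a.2 0 - a.2 1 * a.2 4) - a.1 ^ 2 * a.2 1 * (a.2 0 + 1) / 2
    fun_prop
  · show Continuous fun a : ℂ × (Fin 5 → ℂ) => a.2 3 + a.1 * a.2 1
    fun_prop
  · show Continuous fun a : ℂ × (Fin 5 → ℂ) => a.2 4 + a.1 * (a.2 0 + 1)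
    fun_prop

lemma rho5_leftInv (t : ℂ) (x : Fin 5 → ℂ) : rho5 (x, sigma5 t x) = (t, x) := by
  refine Prod.ext ?_ rfl
  show (sigma5 t x 4 - x 4) - (sigma5 t x 2 - x 2) - (sigma5 t x 3 - x 3) * x 4
      - (sigma5 t x 3 - x 3) * (sigma5 t x 4 - x 4) / 2 = t
  rw [sigma5_2, sigma5_3, sigma5_4]
  ring

/-- `σ` is an action of `(ℂ,+)` on `ℂ⁵`, the action is free, and the
action is proper: `(t,x) ↦ (x, σ_t(x))` has compact preimages of compact sets. -/
theorem sigma5_is_free_proper_additive_action :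
    (∀ x : Fin 5 → ℂ, sigma5 0 x = x) ∧
    (∀ (s t : ℂ) (x : Fin 5 → ℂ), sigma5 s (sigma5 t x) = sigma5 (s + t) x) ∧
    (∀ (t : ℂ) (x : Fin 5 → ℂ), sigma5 t x = x → t = 0) ∧
    (∀ K : Set ((Fin 5 → ℂ) × (Fin 5 → ℂ)), IsCompact K →
      IsCompact ((fun tx : ℂ × (Fin 5 → ℂ) => (tx.2, sigma5 tx.1 tx.2)) ⁻¹' K)) := by
  refine ⟨?_, ?_, ?_, ?_⟩
  · intro x
    funext i
    fin_cases i
    · show sigma5 0 x 0 = x 0; rw [sigma5_0]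
    · show sigma5 0 x 1 = x 1; rw [sigma5_1]
    · show sigma5 0 x 2 = x 2; rw [sigma5_2]; ring
    · show sigma5 0 x 3 = x 3; rw [sigma5_3]; ring
    · show sigma5 0 x 4 = x 4; rw [sigma5_4]; ring
  · intro s t x
    funext i
    fin_cases i
    · show sigma5 s (sigma5 t x) 0 = sigma5 (s + t) x 0
      rw [sigma5_0, sigma5_0, sigma5_0]
    · show sigma5 s (sigma5 t x) 1 = sigma5 (s + t) x 1
      rw [sigma5_1, sigma5_1, sigma5_1]
    · show sigma5 s (sigma5 t x) 2 = sigma5 (s + t) x 2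
      rw [sigma5_2, sigma5_2, sigma5_2, sigma5_0, sigma5_1, sigma5_4]; ring
    · show sigma5 s (sigma5 t x) 3 = sigma5 (s + t) x 3
      rw [sigma5_3, sigma5_3, sigma5_3, sigma5_1]; ring
    · show sigma5 s (sigma5 t x) 4 = sigma5 (s + t) x 4
      rw [sigma5_4, sigma5_4, sigma5_4, sigma5_0]; ring
  · intro t x h
    have h' : rho5 (x, sigma5 t x) = rho5 (x, x) := by rw [h]
    have h0 : (t, x) = rho5 (x, x) := by rw [← h']; exact (rho5_leftInv t x).symm
    have h1 : t = (rho5 (x, x)).1 := congrArg Prod.fst h0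
    simpa [rho5] using h1
  · intro K hK
    have hsub : (fun tx : ℂ × (Fin 5 → ℂ) => (tx.2, sigma5 tx.1 tx.2)) ⁻¹' K ⊆ rho5 '' K := by
      rintro ⟨t, x⟩ hp
      exact ⟨(x, sigma5 t x), hp, rho5_leftInv t x⟩
    exact (hK.image rho5_cont).of_isClosed_subset
      (hK.isClosed.preimage sigma5_cont) hsub
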